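/- Let m₁ > 0 and ε > 0, and let ρ̃ be a Borel measure on the real line supported in [m₁, ∞) with ρ̃((m₁, m₁+ε)) = 0 and ∫ (1/m) dρ̃(m) < ∞. Define, for t > 0, Ĥ(t) = ∫ ( ∫_{-∞}^{∞} e^{-t√(m²+p²)} / (2√(m²+p²)) dp ) dρ̃(m). Then the limit as t → ∞ of Ĥ(t) / (t^{-1/2} e^{-m₁ t}) exists and equals ρ̃({m₁}) · √(π/(2m₁)). -/

import Mathlib

/-!
Split `ρ̃` into its atom at `m₁` and its part on `[m₁ + ε, ∞)`.

On the tail, `√(m² + p²) ≥ (1 - δ) m + δ |p|` bounds the inner integral by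
`exp (-(1 - δ) m t) / (δ t m)`; choosing `δ` with `(1 - δ)(m₁ + ε) > m₁` and using that `1/m` is
`ρ̃`-integrable, the tail is `o(t^{-1/2} e^{-m₁ t})`.

For the atom, the substitution `p = u / √t` turns `√t e^{m t}` times the inner integral into
`∫ exp (-u² / (√(m² + u²/t) + m)) / (2 √(m² + u²/t)) du`, since `m t - t √(m² + u²/t)` equals
`-u² / (√(m² + u²/t) + m)`. By dominated convergence this tends to the Gaussian integral
`∫ e^{-u²/(2m)} / (2m) du = √(π / (2m))`.
-/

open MeasureTheory Filter Real Set Topology Asymptotics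

lemma integral_exp_neg_mul_abs {a : ℝ} (ha : 0 < a) : ∫ x : ℝ, exp (-(a * |x|)) = 2 / a := by
  rw [integral_comp_abs (f := fun x => exp (-(a * x)))]
  simp_rw [← neg_mul]
  rw [integral_exp_mul_Ioi (neg_neg_iff_pos.2 ha) 0]
  field_simp
  simp

lemma integrable_exp_neg_mul_abs {a : ℝ} (ha : 0 < a) : Integrable fun x : ℝ => exp (-(a * |x|)) :=
  .of_integral_ne_zero (by rw [integral_exp_neg_mul_abs ha]; positivity)

noncomputable def propagator (t m : ℝ) : ℝ :=
  ∫ p : ℝ, exp (-t * √(m ^ 2 + p ^ 2)) / (2 * √(m ^ 2 + p ^ 2))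

lemma propagator_nonneg (t m : ℝ) : 0 ≤ propagator t m :=
  integral_nonneg fun _ => by positivity

lemma stronglyMeasurable_propagator (t : ℝ) : StronglyMeasurable (propagator t) := by
  have : StronglyMeasurable fun q : ℝ × ℝ =>
      exp (-t * √(q.1 ^ 2 + q.2 ^ 2)) / (2 * √(q.1 ^ 2 + q.2 ^ 2)) := by
    apply Measurable.stronglyMeasurable
    fun_prop
  exact this.integral_prod_right'

lemma one_sub_mul_add_mul_abs_le_sqrt {δ : ℝ} (hδ₀ : 0 ≤ δ) (hδ₁ : δ ≤ 1) (m p : ℝ) :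
    (1 - δ) * m + δ * |p| ≤ √(m ^ 2 + p ^ 2) := by
  have hm_le : m ≤ √(m ^ 2 + p ^ 2) := le_sqrt_of_sq_le (by nlinarith)
  have hp_le : |p| ≤ √(m ^ 2 + p ^ 2) := abs_le_sqrt (by nlinarith)
  nlinarith

lemma propagator_le {t m δ : ℝ} (ht : 0 < t) (hm : 0 < m) (hδ₀ : 0 < δ) (hδ₁ : δ ≤ 1) :
    propagator t m ≤ exp (-((1 - δ) * m * t)) / (δ * t * m) := by
  have hpoint : ∀ p : ℝ, exp (-t * √(m ^ 2 + p ^ 2)) / (2 * √(m ^ 2 + p ^ 2)) ≤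
      exp (-((1 - δ) * m * t)) / (2 * m) * exp (-(δ * t * |p|)) := by
    intro p
    have hm_le : m ≤ √(m ^ 2 + p ^ 2) := le_sqrt_of_sq_le (by nlinarith)
    have hcomb := one_sub_mul_add_mul_abs_le_sqrt hδ₀.le hδ₁ m p
    rw [div_mul_eq_mul_div, ← exp_add]
    gcongr
    nlinarith
  calc propagator t m
      ≤ ∫ p : ℝ, exp (-((1 - δ) * m * t)) / (2 * m) * exp (-(δ * t * |p|)) :=
        integral_mono_of_nonneg (ae_of_all _ fun _ => by positivity)
          ((integrable_exp_neg_mul_abs (by positivity)).const_mul _) (ae_of_all _ hpoint)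
    _ = exp (-((1 - δ) * m * t)) / (δ * t * m) := by
        rw [integral_const_mul, integral_exp_neg_mul_abs (by positivity)]
        field_simp

lemma integrable_propagator {μ : Measure ℝ} {t : ℝ} (ht : 0 < t) (hpos : ∀ᵐ m ∂μ, 0 < m)
    (hinv : Integrable (fun m : ℝ => 1 / m) μ) : Integrable (propagator t) μ := by
  refine (hinv.const_mul t⁻¹).mono' (stronglyMeasurable_propagator t).aestronglyMeasurable ?_
  filter_upwards [hpos] with m hm
  rw [norm_of_nonneg (propagator_nonneg t m)]
  simpa [mul_comm, div_eq_mul_inv] using propagator_le ht hm one_pos le_rfl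

lemma isBigO_setIntegral_propagator_Ici {μ : Measure ℝ} {b M : ℝ} (hb : 0 ≤ b) (hbM : b < M)
    (hinv : IntegrableOn (fun m : ℝ => 1 / m) (Ici M) μ) :
    (fun t => ∫ m in Ici M, propagator t m ∂μ) =O[atTop] fun t => exp (-(b * t)) / t := by
  have hM : 0 < M := hb.trans_lt hbM
  set δ := 1 - b / M
  have hδ₀ : 0 < δ := sub_pos.2 ((div_lt_one hM).2 hbM)
  have hδ₁ : δ ≤ 1 := sub_le_self _ (div_nonneg hb hM.le)
  refine .of_bound (δ⁻¹ * ∫ m in Ici M, 1 / m ∂μ) ?_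
  filter_upwards [eventually_gt_atTop 0] with t ht
  have hbound : ∀ m ∈ Ici M, propagator t m ≤ δ⁻¹ * (exp (-(b * t)) / t) * (1 / m) := by
    intro m hm
    have hm₀ : 0 < m := hM.trans_le hm
    have hrate : b ≤ (1 - δ) * m := by
      simp only [δ, sub_sub_cancel, div_mul_eq_mul_div]
      exact (le_div_iff₀ hM).2 (mul_le_mul_of_nonneg_left hm hb)
    calc propagator t m ≤ exp (-((1 - δ) * m * t)) / (δ * t * m) := propagator_le ht hm₀ hδ₀ hδ₁
      _ ≤ exp (-(b * t)) / (δ * t * m) := by gcongr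
      _ = δ⁻¹ * (exp (-(b * t)) / t) * (1 / m) := by field_simp
  rw [norm_of_nonneg (integral_nonneg fun m => propagator_nonneg t m),
    norm_of_nonneg (by positivity), mul_right_comm, ← integral_const_mul]
  exact integral_mono_of_nonneg (ae_of_all _ (propagator_nonneg t)) (hinv.const_mul _)
    ((ae_restrict_iff' measurableSet_Ici).2 (ae_of_all _ hbound))

lemma isLittleO_exp_neg_mul_div_self {a b : ℝ} (hab : a < b) :
    (fun t : ℝ => exp (-(b * t)) / t) =o[atTop] fun t => t ^ (-(1 / 2) : ℝ) * exp (-a * t) := by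
  rw [isLittleO_iff_tendsto' ((eventually_gt_atTop 0).mono fun t ht h => absurd h (by positivity))]
  have hlim : Tendsto (fun t : ℝ => t ^ (-(1 / 2) : ℝ) * exp (-((b - a) * t))) atTop (𝓝 0) := by
    simpa using (tendsto_rpow_neg_atTop (by norm_num : (0 : ℝ) < 1 / 2)).mul
      (tendsto_exp_neg_atTop_nhds_zero.comp (tendsto_id.const_mul_atTop (sub_pos.2 hab)))
  refine hlim.congr' ?_
  filter_upwards [eventually_gt_atTop 0] with t ht
  have hsq : t ^ (-(1 / 2) : ℝ) * t ^ (-(1 / 2) : ℝ) = t⁻¹ := by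
    rw [← rpow_add ht]; norm_num [rpow_neg_one]
  rw [div_eq_mul_inv _ t, ← hsq, show -(b * t) = -((b - a) * t) + -a * t by ring, exp_add]
  field_simp

lemma tendsto_setIntegral_propagator_Ici_div {μ : Measure ℝ} {a M : ℝ} (ha : 0 ≤ a) (haM : a < M)
    (hinv : IntegrableOn (fun m : ℝ => 1 / m) (Ici M) μ) :
    Tendsto (fun t => (∫ m in Ici M, propagator t m ∂μ) / (t ^ (-(1 / 2) : ℝ) * exp (-a * t)))
      atTop (𝓝 0) :=
  ((isBigO_setIntegral_propagator_Ici (by linarith) (by linarith : (a + M) / 2 < M)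
    hinv).trans_isLittleO
    (isLittleO_exp_neg_mul_div_self (by linarith : a < (a + M) / 2))).tendsto_div_nhds_zero

lemma integral_exp_neg_sq_div_div (m : ℝ) :
    ∫ u : ℝ, exp (-(u ^ 2 / (2 * m))) / (2 * m) = √(π / (2 * m)) := by
  have hgauss := integral_gaussian (2 * m)⁻¹
  simp_rw [neg_mul, inv_mul_eq_div, div_inv_eq_mul] at hgauss
  rw [integral_div, hgauss, sqrt_mul pi_nonneg, sqrt_div pi_nonneg, mul_div_assoc,
    sqrt_div_self', mul_one_div]

noncomputable def rescaledIntegrand (m t u : ℝ) : ℝ :=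
  exp (-(u ^ 2 / (√(m ^ 2 + u ^ 2 / t) + m))) / (2 * √(m ^ 2 + u ^ 2 / t))

lemma exp_mul_propagator_integrand_eq_rescaledIntegrand {m t : ℝ} (hm : 0 < m) (ht : 0 < t)
    (u : ℝ) : exp (m * t) * (exp (-t * √(m ^ 2 + (u / √t) ^ 2)) / (2 * √(m ^ 2 + (u / √t) ^ 2))) =
      rescaledIntegrand m t u := by
  set s := √(m ^ 2 + u ^ 2 / t)
  have hs : s ^ 2 = m ^ 2 + u ^ 2 / t := sq_sqrt (by positivity)
  have hsm : 0 < s + m := by positivity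
  have hexp : m * t + -t * s = -(u ^ 2 / (s + m)) := by
    have hts : t * s ^ 2 = t * m ^ 2 + u ^ 2 := by rw [hs]; field_simp
    field_simp
    linear_combination -hts
  rw [div_pow, sq_sqrt ht.le, mul_div_assoc', ← exp_add, hexp, rescaledIntegrand]

lemma propagator_div_eq_integral_rescaledIntegrand {m t : ℝ} (hm : 0 < m) (ht : 0 < t) :
    propagator t m / (t ^ (-(1 / 2) : ℝ) * exp (-m * t)) = ∫ u, rescaledIntegrand m t u := by
  have hsubst := Measure.integral_comp_mul_left
    (fun p : ℝ => exp (-t * √(m ^ 2 + p ^ 2)) / (2 * √(m ^ 2 + p ^ 2))) (√t)⁻¹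
  simp only [inv_inv, abs_of_pos (sqrt_pos.2 ht), smul_eq_mul, inv_mul_eq_div] at hsubst
  have hden : t ^ (-(1 / 2) : ℝ) * exp (-m * t) = (√t * exp (m * t))⁻¹ := by
    rw [rpow_neg ht.le, ← sqrt_eq_rpow, neg_mul, exp_neg, mul_inv]
  simp_rw [hden, div_inv_eq_mul, ← exp_mul_propagator_integrand_eq_rescaledIntegrand hm ht,
    integral_const_mul, hsubst, propagator]
  ring

lemma rescaledIntegrand_nonneg (m t u : ℝ) : 0 ≤ rescaledIntegrand m t u := by
  unfold rescaledIntegrand; positivity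

lemma rescaledIntegrand_le {m t : ℝ} (hm : 0 < m) (ht : 1 ≤ t) (u : ℝ) :
    rescaledIntegrand m t u ≤ exp (2 * m) / (2 * m) * exp (-|u|) := by
  set s := √(m ^ 2 + u ^ 2 / t)
  have hms : m ≤ s := le_sqrt_of_sq_le (le_add_of_nonneg_right (by positivity))
  have hsu : s ≤ m + |u| := by
    refine sqrt_le_iff.2 ⟨by positivity, ?_⟩
    have : u ^ 2 / t ≤ u ^ 2 := div_le_self (sq_nonneg u) ht
    nlinarith [sq_abs u, abs_nonneg u]
  have hexp : |u| - 2 * m ≤ u ^ 2 / (s + m) := by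
    rw [le_div_iff₀ (by linarith)]
    rcases le_total (|u|) (2 * m) with hu | hu
    · nlinarith
    · nlinarith [sq_abs u, mul_le_mul_of_nonneg_left (by linarith : s + m ≤ 2 * m + |u|)
        (sub_nonneg.2 hu)]
  calc rescaledIntegrand m t u ≤ exp (2 * m - |u|) / (2 * m) := by
        unfold rescaledIntegrand
        gcongr
        linarith
    _ = exp (2 * m) / (2 * m) * exp (-|u|) := by rw [sub_eq_add_neg, exp_add]; ring

lemma continuous_rescaledIntegrand {m t : ℝ} (hm : 0 < m) (ht : 0 < t) :
    Continuous (rescaledIntegrand m t) := by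
  have hs (u : ℝ) : m ≤ √(m ^ 2 + u ^ 2 / t) :=
    le_sqrt_of_sq_le (le_add_of_nonneg_right (by positivity))
  refine .div (.rexp (.neg (.div (by fun_prop) (by fun_prop) fun u => ?_))) (by fun_prop)
    fun u => ?_ <;> linarith [hs u]

lemma tendsto_rescaledIntegrand {m : ℝ} (hm : 0 < m) (u : ℝ) :
    Tendsto (fun t => rescaledIntegrand m t u) atTop (𝓝 (exp (-(u ^ 2 / (2 * m))) / (2 * m))) := by
  have hsqrt : Tendsto (fun t => √(m ^ 2 + u ^ 2 / t)) atTop (𝓝 m) := by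
    have := ((tendsto_const_nhds (x := u ^ 2)).div_atTop tendsto_id).const_add (m ^ 2)
    simpa [sqrt_sq hm.le] using this.sqrt
  have hlim := ((tendsto_const_nhds (x := u ^ 2)).div (hsqrt.add_const m)
    (by positivity)).neg.rexp.div (hsqrt.const_mul 2) (by positivity)
  rw [← two_mul] at hlim
  exact hlim

lemma tendsto_propagator_div {m : ℝ} (hm : 0 < m) :
    Tendsto (fun t => propagator t m / (t ^ (-(1 / 2) : ℝ) * exp (-m * t))) atTop
      (𝓝 (√(π / (2 * m)))) := by
  rw [← integral_exp_neg_sq_div_div]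
  have hdom : Tendsto (fun t => ∫ u, rescaledIntegrand m t u) atTop
      (𝓝 (∫ u : ℝ, exp (-(u ^ 2 / (2 * m))) / (2 * m))) := by
    refine tendsto_integral_filter_of_dominated_convergence
      (fun u => exp (2 * m) / (2 * m) * exp (-|u|)) ?_ ?_ ?_
      (ae_of_all _ (tendsto_rescaledIntegrand hm))
    · filter_upwards [eventually_gt_atTop 0] with t ht
      exact (continuous_rescaledIntegrand hm ht).aestronglyMeasurable
    · filter_upwards [eventually_ge_atTop 1] with t ht
      refine ae_of_all _ fun u => ?_
      rw [norm_of_nonneg (rescaledIntegrand_nonneg m t u)]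
      exact rescaledIntegrand_le hm ht u
    · simpa using (integrable_exp_neg_mul_abs one_pos).const_mul (exp (2 * m) / (2 * m))
  refine hdom.congr' ?_
  filter_upwards [eventually_gt_atTop 0] with t ht
  exact (propagator_div_eq_integral_rescaledIntegrand hm ht).symm

lemma integral_eq_measureReal_singleton_mul_add_setIntegral_Ici {μ : Measure ℝ} {f : ℝ → ℝ}
    {a b : ℝ} (hab : a < b) (hlow : μ (Iio a) = 0) (hgap : μ (Ioo a b) = 0) (hf : Integrable f μ) :
    ∫ x, f x ∂μ = μ.real {a} * f a + ∫ x in Ici b, f x ∂μ := by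
  have hsupp : ∀ᵐ x ∂μ, x ∈ ({a} ∪ Ici b : Set ℝ) := by
    refine measure_mono_null (fun x hx => ?_) (measure_union_null hlow hgap)
    simp only [mem_compl_iff, mem_ofPred_eq, mem_union, mem_singleton_iff, mem_Ici, not_or,
      not_le] at hx
    rcases lt_or_gt_of_ne hx.1 with h | h
    · exact Or.inl h
    · exact Or.inr ⟨h, hx.2⟩
  have hdisj : Disjoint ({a} : Set ℝ) (Ici b) := disjoint_singleton_left.2 (not_le.2 hab)
  conv_lhs => rw [← Measure.restrict_eq_self_of_ae_mem hsupp]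
  rw [setIntegral_union hdisj measurableSet_Ici hf.integrableOn hf.integrableOn,
    integral_singleton, smul_eq_mul]

/-- Proposition (Ornstein–Zernike behavior under an upper mass gap): if `ρ̃` is supported in
`[m₁, ∞)`, gives no mass to `(m₁, m₁+ε)`, and `∫ (1/m) dρ̃(m) < ∞`, then with
`Ĥ(t) = ∫ (∫ e^{-t√(m²+p²)}/(2√(m²+p²)) dp) dρ̃(m)` one has
`Ĥ(t)/(t^{-1/2} e^{-m₁ t}) → ρ̃({m₁}) √(π/(2m₁))` as `t → ∞`. -/
theorem stmt6 (m₁ ε : ℝ) (hm : 0 < m₁) (hε : 0 < ε) (ρ : Measure ℝ)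
    (hsupp : ρ (Iio m₁) = 0) (hgap : ρ (Ioo m₁ (m₁ + ε)) = 0)
    (hfin : ∫⁻ m, ENNReal.ofReal (1 / m) ∂ρ < ⊤) :
    Tendsto (fun t : ℝ =>
        (∫ m, (∫ p : ℝ, exp (-t * sqrt (m ^ 2 + p ^ 2)) / (2 * sqrt (m ^ 2 + p ^ 2))) ∂ρ) /
          (t ^ (-(1/2) : ℝ) * exp (-m₁ * t)))
      atTop (nhds ((ρ {m₁}).toReal * sqrt (π / (2 * m₁)))) := by
  have hpos : ∀ᵐ m ∂ρ, 0 < m :=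
    measure_mono_null (fun m (hm' : ¬0 < m) => (not_lt.1 hm').trans_lt hm) hsupp
  have hinv : Integrable (fun m : ℝ => 1 / m) ρ :=
    (lintegral_ofReal_ne_top_iff_integrable (by fun_prop)
      (hpos.mono fun m hm' => (one_div_pos.2 hm').le)).1 hfin.ne
  have hlim := ((tendsto_propagator_div hm).const_mul (ρ.real {m₁})).add
    (tendsto_setIntegral_propagator_Ici_div hm.le (lt_add_of_pos_right m₁ hε) hinv.integrableOn)
  rw [add_zero] at hlim
  refine hlim.congr' ?_
  filter_upwards [eventually_gt_atTop 0] with t ht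
  rw [← mul_div_assoc, ← add_div, ← integral_eq_measureReal_singleton_mul_add_setIntegral_Ici
    (lt_add_of_pos_right m₁ hε) hsupp hgap (integrable_propagator ht hpos hinv)]
  rfl
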